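/- Let ε_1,…,ε_N be independent p-dimensional random vectors with E[ε_ℓ] = 0, Cov[ε_ℓ] = Σ_ℓ, and uniformly bounded fourth moments, let X be an N × d fixed design matrix of full column rank with uniformly bounded entries such that N⁻¹X'X converges to a positive definite matrix, and let u_ℓ denote the OLS residual vectors. Then the averaged residual outer products are consistent: N⁻¹ Σ_{ℓ=1}^N (u_ℓ u_ℓ' − Σ_ℓ) → 0 element-wise in probability as N → ∞. -/

import Mathlib

open MeasureTheory ProbabilityTheory Matrix Filter Topology

noncomputable section

namespace GLMArray

variable {p d : ℕ}
variable (X : (N : ℕ) → Matrix (Fin N) (Fin d) ℝ)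
variable {Ω : Type*} [MeasurableSpace Ω]
variable (eps : (N : ℕ) → Fin N → Ω → Fin p → ℝ)

/-- The hat matrix `P = X(X'X)⁻¹X'` with entries `p_{ℓm}`. -/
def hatMat (N : ℕ) : Matrix (Fin N) (Fin N) ℝ :=
  X N * ((X N)ᵀ * X N)⁻¹ * (X N)ᵀ

/-- The OLS residual vectors `u_ℓ = ε_ℓ − ∑_m p_{ℓm} ε_m`. -/
def resid (N : ℕ) (ω : Ω) (ℓ : Fin N) (k : Fin p) : ℝ :=
  eps N ℓ ω k - ∑ m, hatMat X N ℓ m * eps N m ω k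

end GLMArray

open GLMArray

private lemma auxCS {Ω : Type*} [MeasurableSpace Ω] (P : Measure Ω) [IsProbabilityMeasure P]
    (f g : Ω → ℝ) (hf : MemLp f 2 P) (hg : MemLp g 2 P) :
    ∫ ω, |f ω * g ω| ∂P ≤ Real.sqrt (∫ ω, f ω ^ 2 ∂P) * Real.sqrt (∫ ω, g ω ^ 2 ∂P) := by
  have hconj : (2:ℝ).HolderConjugate 2 := Real.HolderConjugate.two_two
  have hf2 : MemLp f (ENNReal.ofReal (2:ℝ)) P := by
    simpa [ENNReal.ofReal_ofNat] using hf
  have hg2 : MemLp g (ENNReal.ofReal (2:ℝ)) P := by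
    simpa [ENNReal.ofReal_ofNat] using hg
  have h := MeasureTheory.integral_mul_norm_le_Lp_mul_Lq (μ := P) hconj hf2 hg2
  have e : ∀ (h : Ω → ℝ), ∫ ω, ‖h ω‖ ^ (2:ℝ) ∂P = ∫ ω, h ω ^ 2 ∂P := by
    intro h
    refine integral_congr_ae (Filter.Eventually.of_forall fun ω => ?_)
    show ‖h ω‖ ^ (2:ℝ) = h ω ^ 2
    rw [show (2:ℝ) = ((2:ℕ):ℝ) by norm_num, Real.rpow_natCast, Real.norm_eq_abs, sq_abs]
  rw [e f, e g] at h
  have hL : ∫ ω, |f ω * g ω| ∂P = ∫ ω, ‖f ω‖ * ‖g ω‖ ∂P := by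
    refine integral_congr_ae (Filter.Eventually.of_forall fun ω => ?_)
    show |f ω * g ω| = ‖f ω‖ * ‖g ω‖
    rw [Real.norm_eq_abs, Real.norm_eq_abs, abs_mul]
  rw [hL]
  refine h.trans (le_of_eq ?_)
  rw [Real.sqrt_eq_rpow, Real.sqrt_eq_rpow]

private lemma auxHat {d N : ℕ} (X : Matrix (Fin N) (Fin d) ℝ) (h : X.rank = d) :
    ∑ ℓ, ∑ m, (X * ((Xᵀ * X)⁻¹) * Xᵀ) ℓ m ^ 2 = d := by
  set M : Matrix (Fin d) (Fin d) ℝ := Xᵀ * X with hM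
  have hMrank : M.rank = d := by rw [hM, Matrix.rank_transpose_mul_self, h]
  have hdet : IsUnit M.det := by
    rw [← Matrix.isUnit_iff_isUnit_det]
    rw [← Matrix.mulVec_injective_iff_isUnit]
    have hsurj : Function.Surjective M.mulVecLin := by
      rw [← LinearMap.range_eq_top]
      apply Submodule.eq_top_of_finrank_eq
      rw [Module.finrank_fintype_fun_eq_card, Fintype.card_fin]
      exact hMrank
    have hinj : Function.Injective M.mulVecLin :=
      (LinearMap.injective_iff_surjective).mpr hsurj
    exact hinj
  have hMT : Mᵀ = M := by rw [hM, Matrix.transpose_mul, Matrix.transpose_transpose]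
  set H : Matrix (Fin N) (Fin N) ℝ := X * M⁻¹ * Xᵀ with hH
  have hHsymm : Hᵀ = H := by
    rw [hH, Matrix.transpose_mul, Matrix.transpose_mul, Matrix.transpose_transpose,
      Matrix.transpose_nonsing_inv, hMT, Matrix.mul_assoc]
  have hHH : H * H = H := by
    rw [hH]
    calc X * M⁻¹ * Xᵀ * (X * M⁻¹ * Xᵀ) = X * M⁻¹ * (Xᵀ * X) * M⁻¹ * Xᵀ := by
          simp only [Matrix.mul_assoc]
      _ = X * (M⁻¹ * M) * M⁻¹ * Xᵀ := by rw [← hM]; simp only [Matrix.mul_assoc]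
      _ = X * M⁻¹ * Xᵀ := by rw [Matrix.nonsing_inv_mul M hdet, Matrix.mul_one]
  have htr : H.trace = d := by
    rw [hH, Matrix.trace_mul_comm (X * M⁻¹) Xᵀ, ← Matrix.mul_assoc, ← hM,
      Matrix.mul_nonsing_inv M hdet, Matrix.trace_one, Fintype.card_fin]
  calc ∑ ℓ, ∑ m, H ℓ m ^ 2 = (H * Hᵀ).trace := by
        simp [Matrix.trace, Matrix.mul_apply, Matrix.diag, sq]
    _ = d := by rw [hHsymm, hHH, htr]

private lemma auxMul {Ω : Type*} [MeasurableSpace Ω] {P : Measure Ω} (f g : Ω → ℝ)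
    (hf : MemLp f 4 P) (hg : MemLp g 4 P) : MemLp (fun ω => f ω * g ω) 2 P := by
  have e : (1:ENNReal)/2 = 1/4 + 1/4 := by
    rw [ENNReal.div_add_div_same, show (4:ENNReal) = 2*2 by norm_num,
      ENNReal.div_eq_div_iff (by norm_num) (by norm_num) (by norm_num) (by norm_num)]
    ring
  have h := hg.smul hf (p := 4) (q := 4) (r := 2) (hpqr := ⟨by simpa [one_div] using e.symm⟩)
  exact h

private lemma auxIntMul {Ω : Type*} [MeasurableSpace Ω] {P : Measure Ω} (f g : Ω → ℝ)
    (hf : MemLp f 2 P) (hg : MemLp g 2 P) : Integrable (fun ω => f ω * g ω) P := by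
  have e : (1:ENNReal)/1 = 1/2 + 1/2 := by
    rw [ENNReal.div_add_div_same, one_add_one_eq_two]
    norm_num
    exact (ENNReal.div_self (by norm_num) (by norm_num)).symm
  have h := hg.smul hf (p := 2) (q := 2) (r := 1) (hpqr := ⟨by simpa [one_div] using e.symm⟩)
  rw [← memLp_one_iff_integrable]
  exact h

private lemma auxInt {Ω : Type*} [MeasurableSpace Ω] {P : Measure Ω} [IsProbabilityMeasure P]
    (f : Ω → ℝ) (hf : MemLp f 2 P) : Integrable f P :=
  memLp_one_iff_integrable.mp (hf.mono_exponent (by norm_num))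

private lemma auxL2ofL4 {Ω : Type*} [MeasurableSpace Ω] {P : Measure Ω} [IsProbabilityMeasure P]
    (f : Ω → ℝ) (hf : MemLp f 4 P) : MemLp f 2 P :=
  hf.mono_exponent (by norm_num)

private lemma auxSumCS {n : ℕ} (x y : Fin n → ℝ) (hx : ∀ i, 0 ≤ x i) (hy : ∀ i, 0 ≤ y i) :
    ∑ i, Real.sqrt (x i) * Real.sqrt (y i) ≤
      Real.sqrt (∑ i, x i) * Real.sqrt (∑ i, y i) := by
  have h := Finset.sum_mul_sq_le_sq_mul_sq Finset.univ
    (fun i => Real.sqrt (x i)) (fun i => Real.sqrt (y i))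
  simp only [Real.sq_sqrt (hx _), Real.sq_sqrt (hy _)] at h
  rw [← Real.sqrt_mul (Finset.sum_nonneg fun i _ => hx i)]
  have h0 : 0 ≤ ∑ i, Real.sqrt (x i) * Real.sqrt (y i) :=
    Finset.sum_nonneg fun i _ => mul_nonneg (Real.sqrt_nonneg _) (Real.sqrt_nonneg _)
  have hs : 0 ≤ (∑ i, x i) * ∑ i, y i :=
    mul_nonneg (Finset.sum_nonneg fun i _ => hx i) (Finset.sum_nonneg fun i _ => hy i)
  exact (Real.le_sqrt h0 hs).mpr h

private lemma auxSqInt {Ω : Type*} [MeasurableSpace Ω] (P : Measure Ω) [IsProbabilityMeasure P]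
    (f : Ω → ℝ) (hf : MemLp f 4 P) :
    ∫ ω, f ω ^ 2 ∂P ≤ Real.sqrt (∫ ω, f ω ^ 4 ∂P) := by
  have h := auxCS P (fun ω => f ω * f ω) (fun _ => (1:ℝ)) (auxMul f f hf hf)
    (memLp_const 1)
  have e1 : ∫ ω, |f ω * f ω * 1| ∂P = ∫ ω, f ω ^ 2 ∂P := by
    refine integral_congr_ae (Filter.Eventually.of_forall fun ω => ?_)
    show |f ω * f ω * 1| = f ω ^ 2
    rw [mul_one, abs_of_nonneg (mul_self_nonneg _), sq]
  have e2 : ∫ ω, (f ω * f ω) ^ 2 ∂P = ∫ ω, f ω ^ 4 ∂P := by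
    refine integral_congr_ae (Filter.Eventually.of_forall fun ω => ?_)
    show (f ω * f ω) ^ 2 = f ω ^ 4
    ring
  have e3 : ∫ (_ : Ω), (1:ℝ) ^ 2 ∂P = 1 := by simp
  rw [e1, e2, e3] at h
  simpa using h

private lemma auxKey
    {p d : ℕ}
    (X : (N : ℕ) → Matrix (Fin N) (Fin d) ℝ)
    {Ω : Type*} [MeasurableSpace Ω] (P : Measure Ω) [IsProbabilityMeasure P]
    (eps : (N : ℕ) → Fin N → Ω → Fin p → ℝ)
    (Sig : (N : ℕ) → Fin N → Matrix (Fin p) (Fin p) ℝ)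
    (C₁ : ℝ) (hC₁ : 0 ≤ C₁)
    (hL4 : ∀ N ℓ k, MemLp (fun ω => eps N ℓ ω k) 4 P)
    (hindep : ∀ N, iIndepFun
      (fun ℓ => eps N ℓ) P)
    (hmean : ∀ N ℓ k, ∫ ω, eps N ℓ ω k ∂P = 0)
    (hcov : ∀ N ℓ k l, ∫ ω, eps N ℓ ω k * eps N ℓ ω l ∂P = Sig N ℓ k l)
    (hmom4 : ∀ N ℓ k, ∫ ω, (eps N ℓ ω k) ^ 4 ∂P ≤ C₁)
    (hXrank : ∀ N, d ≤ N → (X N).rank = d)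
    (k l : Fin p) (n : ℕ) (hdn : d ≤ n) (h1n : 1 ≤ n) :
    Integrable (fun ω => (n : ℝ)⁻¹ * ∑ ℓ,
        (resid X eps n ω ℓ k * resid X eps n ω ℓ l - Sig n ℓ k l)) P ∧
    ∫ ω, |(n : ℝ)⁻¹ * ∑ ℓ,
        (resid X eps n ω ℓ k * resid X eps n ω ℓ l - Sig n ℓ k l)| ∂P ≤
      (Real.sqrt C₁ + 2 * Real.sqrt (d * C₁)) * Real.sqrt ((n:ℝ)⁻¹)
        + (d * Real.sqrt C₁) * (n:ℝ)⁻¹ := by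
  -- abbreviations
  set H : Matrix (Fin n) (Fin n) ℝ := hatMat X n with hHdef
  -- basic MemLp facts
  have hL4e : ∀ (j : Fin p) (ℓ : Fin n), MemLp (fun ω => eps n ℓ ω j) 4 P := fun j ℓ => hL4 n ℓ j
  have hL2e : ∀ (j : Fin p) (ℓ : Fin n), MemLp (fun ω => eps n ℓ ω j) 2 P :=
    fun j ℓ => auxL2ofL4 _ (hL4e j ℓ)
  -- independence of compositions
  have hpind : ∀ (ℓ m : Fin n), ℓ ≠ m → ∀ (φ ψ : (Fin p → ℝ) → ℝ), Measurable φ → Measurable ψ →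
      IndepFun (fun ω => φ (eps n ℓ ω)) (fun ω => ψ (eps n m ω)) P :=
    fun ℓ m hne φ ψ hφ hψ => ((hindep n).indepFun hne).comp hφ hψ
  -- off-diagonal single-coordinate products vanish
  have hee0 : ∀ (j : Fin p) (ℓ m : Fin n), ℓ ≠ m →
      ∫ ω, eps n ℓ ω j * eps n m ω j ∂P = 0 := by
    intro j ℓ m hne
    have hi := hpind ℓ m hne (fun x => x j) (fun x => x j)
      (measurable_pi_apply j) (measurable_pi_apply j)
    have h2 := hi.integral_fun_mul_eq_mul_integral
      (auxInt _ (hL2e j ℓ)).aestronglyMeasurable (auxInt _ (hL2e j m)).aestronglyMeasurable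
    have h3 : ∫ ω, eps n ℓ ω j * eps n m ω j ∂P
        = (∫ ω, eps n ℓ ω j ∂P) * ∫ ω, eps n m ω j ∂P := h2
    rw [h3, hmean n ℓ j, zero_mul]
  -- second moments bounded by √C₁
  have heSq : ∀ (j : Fin p) (ℓ : Fin n), ∫ ω, (eps n ℓ ω j) ^ 2 ∂P ≤ Real.sqrt C₁ :=
    fun j ℓ => (auxSqInt P _ (hL4e j ℓ)).trans (Real.sqrt_le_sqrt (hmom4 n ℓ j))
  have hSigjj : ∀ (j : Fin p) (m : Fin n), Sig n m j j ≤ Real.sqrt C₁ := by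
    intro j m
    rw [← hcov n m j j]
    have e : ∫ ω, eps n m ω j * eps n m ω j ∂P = ∫ ω, (eps n m ω j) ^ 2 ∂P := by
      refine integral_congr_ae (Filter.Eventually.of_forall fun ω => ?_)
      show eps n m ω j * eps n m ω j = (eps n m ω j) ^ 2
      ring
    rw [e]; exact heSq j m
  -- the centered products
  set A : Fin n → Ω → ℝ := fun ℓ ω => eps n ℓ ω k * eps n ℓ ω l - Sig n ℓ k l with hAd
  have hA2 : ∀ ℓ, MemLp (A ℓ) 2 P :=
    fun ℓ => (auxMul _ _ (hL4e k ℓ) (hL4e l ℓ)).sub (memLp_const _)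
  have hAint : ∀ ℓ, Integrable (A ℓ) P := fun ℓ => auxInt _ (hA2 ℓ)
  have hIkl : ∀ ℓ : Fin n, Integrable (fun ω => eps n ℓ ω k * eps n ℓ ω l) P :=
    fun ℓ => auxIntMul _ _ (hL2e k ℓ) (hL2e l ℓ)
  have hAmean : ∀ ℓ, ∫ ω, A ℓ ω ∂P = 0 := by
    intro ℓ
    have : ∫ ω, A ℓ ω ∂P = ∫ ω, (eps n ℓ ω k * eps n ℓ ω l - Sig n ℓ k l) ∂P := rfl
    rw [this, integral_sub (hIkl ℓ) (integrable_const _), hcov n ℓ k l, integral_const]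
    simp
  have hAprodInt : ∀ ℓ m, Integrable (fun ω => A ℓ ω * A m ω) P :=
    fun ℓ m => auxIntMul _ _ (hA2 ℓ) (hA2 m)
  have hAoff : ∀ ℓ m, ℓ ≠ m → ∫ ω, A ℓ ω * A m ω ∂P = 0 := by
    intro ℓ m hne
    have hφ : ∀ (c : ℝ), Measurable (fun x : Fin p → ℝ => x k * x l - c) :=
      fun c => ((measurable_pi_apply k).mul (measurable_pi_apply l)).sub measurable_const
    have hi := hpind ℓ m hne _ _ (hφ (Sig n ℓ k l)) (hφ (Sig n m k l))
    have h2 := hi.integral_fun_mul_eq_mul_integral (hAint ℓ).aestronglyMeasurable (hAint m).aestronglyMeasurable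
    have h3 : ∫ ω, A ℓ ω * A m ω ∂P = (∫ ω, A ℓ ω ∂P) * ∫ ω, A m ω ∂P := h2
    rw [h3, hAmean ℓ, zero_mul]
  -- diagonal bound
  have habab : ∀ ℓ : Fin n, ∫ ω, (eps n ℓ ω k * eps n ℓ ω l) * (eps n ℓ ω k * eps n ℓ ω l) ∂P
      ≤ C₁ := by
    intro ℓ
    have e : ∀ ω, (eps n ℓ ω k * eps n ℓ ω l) * (eps n ℓ ω k * eps n ℓ ω l)
        = |(eps n ℓ ω k * eps n ℓ ω k) * (eps n ℓ ω l * eps n ℓ ω l)| := by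
      intro ω
      rw [abs_of_nonneg (mul_nonneg (mul_self_nonneg _) (mul_self_nonneg _))]
      ring
    rw [integral_congr_ae (Filter.Eventually.of_forall fun ω => e ω)]
    have h := auxCS P (fun ω => eps n ℓ ω k * eps n ℓ ω k)
      (fun ω => eps n ℓ ω l * eps n ℓ ω l)
      (auxMul _ _ (hL4e k ℓ) (hL4e k ℓ)) (auxMul _ _ (hL4e l ℓ) (hL4e l ℓ))
    refine h.trans ?_
    have e4 : ∀ (j : Fin p), ∫ ω, (eps n ℓ ω j * eps n ℓ ω j) ^ 2 ∂P
        = ∫ ω, (eps n ℓ ω j) ^ 4 ∂P := by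
      intro j
      refine integral_congr_ae (Filter.Eventually.of_forall fun ω => ?_)
      show (eps n ℓ ω j * eps n ℓ ω j) ^ 2 = (eps n ℓ ω j) ^ 4
      ring
    rw [e4 k, e4 l]
    have hm : ∀ (j : Fin p), Real.sqrt (∫ ω, (eps n ℓ ω j) ^ 4 ∂P) ≤ Real.sqrt C₁ :=
      fun j => Real.sqrt_le_sqrt (hmom4 n ℓ j)
    calc Real.sqrt (∫ ω, (eps n ℓ ω k) ^ 4 ∂P) * Real.sqrt (∫ ω, (eps n ℓ ω l) ^ 4 ∂P)
        ≤ Real.sqrt C₁ * Real.sqrt C₁ :=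
          mul_le_mul (hm k) (hm l) (Real.sqrt_nonneg _) (Real.sqrt_nonneg _)
      _ = C₁ := Real.mul_self_sqrt hC₁
  have hAdiag : ∀ ℓ, ∫ ω, A ℓ ω * A ℓ ω ∂P ≤ C₁ := by
    intro ℓ
    have e : ∀ ω, A ℓ ω * A ℓ ω = (eps n ℓ ω k * eps n ℓ ω l) * (eps n ℓ ω k * eps n ℓ ω l)
        - (2 * Sig n ℓ k l) * (eps n ℓ ω k * eps n ℓ ω l) + Sig n ℓ k l ^ 2 := by
      intro ω
      show (eps n ℓ ω k * eps n ℓ ω l - Sig n ℓ k l) * (eps n ℓ ω k * eps n ℓ ω l - Sig n ℓ k l) = _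
      ring
    rw [integral_congr_ae (Filter.Eventually.of_forall fun ω => e ω)]
    have hIq : Integrable (fun ω => (eps n ℓ ω k * eps n ℓ ω l) * (eps n ℓ ω k * eps n ℓ ω l)) P :=
      auxIntMul _ _ (auxMul _ _ (hL4e k ℓ) (hL4e l ℓ)) (auxMul _ _ (hL4e k ℓ) (hL4e l ℓ))
    have h4 : ∫ ω, ((eps n ℓ ω k * eps n ℓ ω l) * (eps n ℓ ω k * eps n ℓ ω l)
          - (2 * Sig n ℓ k l) * (eps n ℓ ω k * eps n ℓ ω l) + Sig n ℓ k l ^ 2) ∂P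
        = (∫ ω, ((eps n ℓ ω k * eps n ℓ ω l) * (eps n ℓ ω k * eps n ℓ ω l)
          - (2 * Sig n ℓ k l) * (eps n ℓ ω k * eps n ℓ ω l)) ∂P) + ∫ _, Sig n ℓ k l ^ 2 ∂P :=
      integral_add (hIq.sub ((hIkl ℓ).const_mul _)) (integrable_const _)
    have h5 : ∫ ω, ((eps n ℓ ω k * eps n ℓ ω l) * (eps n ℓ ω k * eps n ℓ ω l)
          - (2 * Sig n ℓ k l) * (eps n ℓ ω k * eps n ℓ ω l)) ∂P
        = (∫ ω, (eps n ℓ ω k * eps n ℓ ω l) * (eps n ℓ ω k * eps n ℓ ω l) ∂P)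
          - ∫ ω, (2 * Sig n ℓ k l) * (eps n ℓ ω k * eps n ℓ ω l) ∂P :=
      integral_sub hIq ((hIkl ℓ).const_mul _)
    rw [h4, h5, integral_const_mul, hcov n ℓ k l, integral_const]
    have h := habab ℓ
    have h2 := sq_nonneg (Sig n ℓ k l)
    simp only [measure_univ, ENNReal.toReal_one, smul_eq_mul, one_mul, probReal_univ]
    nlinarith [h, h2]
  -- L² norm of the sum of A
  have hA_L2sum : MemLp (fun ω => ∑ ℓ, A ℓ ω) 2 P :=
    memLp_finsetSum Finset.univ (fun ℓ _ => hA2 ℓ)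
  have hsumAsq : ∫ ω, (∑ ℓ, A ℓ ω) ^ 2 ∂P ≤ (n : ℝ) * C₁ := by
    have e : ∀ ω, (∑ ℓ, A ℓ ω) ^ 2 = ∑ ℓ, ∑ m, A ℓ ω * A m ω := by
      intro ω; rw [sq, Finset.sum_mul_sum]
    rw [integral_congr_ae (Filter.Eventually.of_forall e)]
    rw [integral_finset_sum _ (fun ℓ _ => integrable_finset_sum _ (fun m _ => hAprodInt ℓ m))]
    have e2 : ∀ ℓ : Fin n, ∫ ω, ∑ m, A ℓ ω * A m ω ∂P = ∫ ω, A ℓ ω * A ℓ ω ∂P := by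
      intro ℓ
      rw [integral_finset_sum _ (fun m _ => hAprodInt ℓ m)]
      exact Finset.sum_eq_single ℓ (fun m _ hm => hAoff ℓ m (Ne.symm hm)) (by simp)
    calc ∑ ℓ, ∫ ω, ∑ m, A ℓ ω * A m ω ∂P = ∑ ℓ : Fin n, ∫ ω, A ℓ ω * A ℓ ω ∂P :=
          Finset.sum_congr rfl (fun ℓ _ => e2 ℓ)
      _ ≤ ∑ _ℓ : Fin n, C₁ := Finset.sum_le_sum (fun ℓ _ => hAdiag ℓ)
      _ = (n : ℝ) * C₁ := by simp [Finset.sum_const, Finset.card_univ, nsmul_eq_mul]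
  have hsumAabs : ∫ ω, |∑ ℓ, A ℓ ω| ∂P ≤ Real.sqrt ((n : ℝ) * C₁) := by
    have h := auxCS P (fun ω => ∑ ℓ, A ℓ ω) (fun _ => (1:ℝ)) hA_L2sum (memLp_const 1)
    have e1 : ∫ ω, |(∑ ℓ, A ℓ ω) * 1| ∂P = ∫ ω, |∑ ℓ, A ℓ ω| ∂P := by
      refine integral_congr_ae (Filter.Eventually.of_forall fun ω => ?_)
      show |(∑ ℓ, A ℓ ω) * 1| = |∑ ℓ, A ℓ ω|
      rw [mul_one]
    have e3 : ∫ (_ : Ω), (1:ℝ) ^ 2 ∂P = 1 := by simp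
    rw [e1, e3, Real.sqrt_one, mul_one] at h
    exact h.trans (Real.sqrt_le_sqrt hsumAsq)
  -- second moments of the projected rows
  have hIjj : ∀ (j : Fin p) (m m' : Fin n), Integrable (fun ω => eps n m ω j * eps n m' ω j) P :=
    fun j m m' => auxIntMul _ _ (hL2e j m) (hL2e j m')
  have hrow : ∀ (j : Fin p) (ℓ : Fin n),
      ∫ ω, (∑ m, H ℓ m * eps n m ω j) ^ 2 ∂P = ∑ m, H ℓ m ^ 2 * Sig n m j j := by
    intro j ℓ
    have e : ∀ ω, (∑ m, H ℓ m * eps n m ω j) ^ 2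
        = ∑ m, ∑ m', (H ℓ m * H ℓ m') * (eps n m ω j * eps n m' ω j) := by
      intro ω
      rw [sq, Finset.sum_mul_sum]
      refine Finset.sum_congr rfl (fun m _ => Finset.sum_congr rfl (fun m' _ => by ring))
    rw [integral_congr_ae (Filter.Eventually.of_forall e)]
    rw [integral_finset_sum _ (fun m _ => integrable_finset_sum _
      (fun m' _ => (hIjj j m m').const_mul _))]
    refine Finset.sum_congr rfl (fun m _ => ?_)
    rw [integral_finset_sum _ (fun m' _ => (hIjj j m m').const_mul _)]
    rw [Finset.sum_eq_single m
      (fun m' _ hm' => by rw [integral_const_mul, hee0 j m m' (Ne.symm hm'), mul_zero])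
      (by simp)]
    rw [integral_const_mul, hcov n m j j, sq]
  have hHsum : ∑ ℓ, ∑ m, H ℓ m ^ 2 = (d : ℝ) := by
    have h := auxHat (X n) (hXrank n hdn)
    exact h
  have hsumrow : ∀ (j : Fin p),
      ∑ ℓ, ∫ ω, (∑ m, H ℓ m * eps n m ω j) ^ 2 ∂P ≤ (d : ℝ) * Real.sqrt C₁ := by
    intro j
    calc ∑ ℓ, ∫ ω, (∑ m, H ℓ m * eps n m ω j) ^ 2 ∂P
        = ∑ ℓ, ∑ m, H ℓ m ^ 2 * Sig n m j j := Finset.sum_congr rfl (fun ℓ _ => hrow j ℓ)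
      _ ≤ ∑ ℓ, ∑ m, H ℓ m ^ 2 * Real.sqrt C₁ :=
          Finset.sum_le_sum (fun ℓ _ => Finset.sum_le_sum (fun m _ =>
            mul_le_mul_of_nonneg_left (hSigjj j m) (sq_nonneg _)))
      _ = (∑ ℓ, ∑ m, H ℓ m ^ 2) * Real.sqrt C₁ := by
          rw [Finset.sum_mul]
          exact Finset.sum_congr rfl (fun ℓ _ => (Finset.sum_mul _ _ _).symm)
      _ = (d : ℝ) * Real.sqrt C₁ := by rw [hHsum]
  have hsume : ∀ (j : Fin p), ∑ ℓ : Fin n, ∫ ω, (eps n ℓ ω j) ^ 2 ∂P ≤ (n : ℝ) * Real.sqrt C₁ := by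
    intro j
    calc ∑ ℓ : Fin n, ∫ ω, (eps n ℓ ω j) ^ 2 ∂P ≤ ∑ _ℓ : Fin n, Real.sqrt C₁ :=
          Finset.sum_le_sum (fun ℓ _ => heSq j ℓ)
      _ = (n : ℝ) * Real.sqrt C₁ := by simp [Finset.sum_const, Finset.card_univ, nsmul_eq_mul]
  -- MemLp of projected rows
  have hv4 : ∀ (j : Fin p) (ℓ : Fin n), MemLp (fun ω => ∑ m, H ℓ m * eps n m ω j) 4 P :=
    fun j ℓ => memLp_finsetSum Finset.univ (fun m _ => (hL4e j m).const_mul (H ℓ m))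
  have hv2 : ∀ (j : Fin p) (ℓ : Fin n), MemLp (fun ω => ∑ m, H ℓ m * eps n m ω j) 2 P :=
    fun j ℓ => auxL2ofL4 _ (hv4 j ℓ)
  -- generic summed Cauchy-Schwarz
  have hgen : ∀ (f g : Fin n → Ω → ℝ), (∀ ℓ, MemLp (f ℓ) 2 P) → (∀ ℓ, MemLp (g ℓ) 2 P) →
      ∑ ℓ, ∫ ω, |f ℓ ω * g ℓ ω| ∂P ≤
        Real.sqrt (∑ ℓ, ∫ ω, f ℓ ω ^ 2 ∂P) * Real.sqrt (∑ ℓ, ∫ ω, g ℓ ω ^ 2 ∂P) := by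
    intro f g hf hg
    calc ∑ ℓ, ∫ ω, |f ℓ ω * g ℓ ω| ∂P
        ≤ ∑ ℓ, Real.sqrt (∫ ω, f ℓ ω ^ 2 ∂P) * Real.sqrt (∫ ω, g ℓ ω ^ 2 ∂P) :=
          Finset.sum_le_sum (fun ℓ _ => auxCS P (f ℓ) (g ℓ) (hf ℓ) (hg ℓ))
      _ ≤ _ := auxSumCS _ _ (fun ℓ => integral_nonneg (fun ω => sq_nonneg _))
          (fun ℓ => integral_nonneg (fun ω => sq_nonneg _))
  -- the three cross-term bounds
  have T2 : ∑ ℓ, ∫ ω, |eps n ℓ ω k * ∑ m, H ℓ m * eps n m ω l| ∂P ≤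
      Real.sqrt ((n : ℝ) * Real.sqrt C₁) * Real.sqrt ((d : ℝ) * Real.sqrt C₁) := by
    refine (hgen (fun ℓ ω => eps n ℓ ω k) (fun ℓ ω => ∑ m, H ℓ m * eps n m ω l)
      (fun ℓ => hL2e k ℓ) (fun ℓ => hv2 l ℓ)).trans ?_
    exact mul_le_mul (Real.sqrt_le_sqrt (hsume k)) (Real.sqrt_le_sqrt (hsumrow l))
      (Real.sqrt_nonneg _) (Real.sqrt_nonneg _)
  have T3 : ∑ ℓ, ∫ ω, |(∑ m, H ℓ m * eps n m ω k) * eps n ℓ ω l| ∂P ≤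
      Real.sqrt ((d : ℝ) * Real.sqrt C₁) * Real.sqrt ((n : ℝ) * Real.sqrt C₁) := by
    refine (hgen (fun ℓ ω => ∑ m, H ℓ m * eps n m ω k) (fun ℓ ω => eps n ℓ ω l)
      (fun ℓ => hv2 k ℓ) (fun ℓ => hL2e l ℓ)).trans ?_
    exact mul_le_mul (Real.sqrt_le_sqrt (hsumrow k)) (Real.sqrt_le_sqrt (hsume l))
      (Real.sqrt_nonneg _) (Real.sqrt_nonneg _)
  have T4 : ∑ ℓ, ∫ ω, |(∑ m, H ℓ m * eps n m ω k) * ∑ m, H ℓ m * eps n m ω l| ∂P ≤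
      Real.sqrt ((d : ℝ) * Real.sqrt C₁) * Real.sqrt ((d : ℝ) * Real.sqrt C₁) := by
    refine (hgen (fun ℓ ω => ∑ m, H ℓ m * eps n m ω k) (fun ℓ ω => ∑ m, H ℓ m * eps n m ω l)
      (fun ℓ => hv2 k ℓ) (fun ℓ => hv2 l ℓ)).trans ?_
    exact mul_le_mul (Real.sqrt_le_sqrt (hsumrow k)) (Real.sqrt_le_sqrt (hsumrow l))
      (Real.sqrt_nonneg _) (Real.sqrt_nonneg _)
  -- pointwise bound
  have hpt : ∀ ω, |(n : ℝ)⁻¹ * ∑ ℓ,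
        (resid X eps n ω ℓ k * resid X eps n ω ℓ l - Sig n ℓ k l)| ≤
      (n : ℝ)⁻¹ * (|∑ ℓ, A ℓ ω| + ∑ ℓ, |eps n ℓ ω k * ∑ m, H ℓ m * eps n m ω l|
        + ∑ ℓ, |(∑ m, H ℓ m * eps n m ω k) * eps n ℓ ω l|
        + ∑ ℓ, |(∑ m, H ℓ m * eps n m ω k) * ∑ m, H ℓ m * eps n m ω l|) := by
    intro ω
    have hdec : ∑ ℓ, (resid X eps n ω ℓ k * resid X eps n ω ℓ l - Sig n ℓ k l)
        = ∑ ℓ, A ℓ ω - ∑ ℓ, (eps n ℓ ω k * ∑ m, H ℓ m * eps n m ω l)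
          - ∑ ℓ, ((∑ m, H ℓ m * eps n m ω k) * eps n ℓ ω l)
          + ∑ ℓ, ((∑ m, H ℓ m * eps n m ω k) * ∑ m, H ℓ m * eps n m ω l) := by
      have hper : ∀ ℓ : Fin n, resid X eps n ω ℓ k * resid X eps n ω ℓ l - Sig n ℓ k l
          = A ℓ ω - (eps n ℓ ω k * ∑ m, H ℓ m * eps n m ω l)
            - ((∑ m, H ℓ m * eps n m ω k) * eps n ℓ ω l)
            + ((∑ m, H ℓ m * eps n m ω k) * ∑ m, H ℓ m * eps n m ω l) := by
        intro ℓ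
        have h1 : resid X eps n ω ℓ k = eps n ℓ ω k - ∑ m, H ℓ m * eps n m ω k := rfl
        have h2 : resid X eps n ω ℓ l = eps n ℓ ω l - ∑ m, H ℓ m * eps n m ω l := rfl
        have h3 : A ℓ ω = eps n ℓ ω k * eps n ℓ ω l - Sig n ℓ k l := rfl
        rw [h1, h2, h3]
        ring
      rw [Finset.sum_congr rfl (fun ℓ _ => hper ℓ), Finset.sum_add_distrib,
        Finset.sum_sub_distrib, Finset.sum_sub_distrib]
    rw [hdec, abs_mul, abs_of_nonneg (inv_nonneg.mpr (Nat.cast_nonneg n))]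
    refine mul_le_mul_of_nonneg_left ?_ (inv_nonneg.mpr (Nat.cast_nonneg n))
    set x1 := ∑ ℓ, A ℓ ω
    set x2 := ∑ ℓ, (eps n ℓ ω k * ∑ m, H ℓ m * eps n m ω l) with hx2
    set x3 := ∑ ℓ, ((∑ m, H ℓ m * eps n m ω k) * eps n ℓ ω l) with hx3
    set x4 := ∑ ℓ, ((∑ m, H ℓ m * eps n m ω k) * ∑ m, H ℓ m * eps n m ω l) with hx4
    calc |x1 - x2 - x3 + x4| ≤ |x1 - x2 - x3| + |x4| := abs_add_le _ _
      _ ≤ (|x1 - x2| + |x3|) + |x4| := add_le_add (abs_sub _ _) le_rfl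
      _ ≤ ((|x1| + |x2|) + |x3|) + |x4| :=
          add_le_add (add_le_add (abs_sub _ _) le_rfl) le_rfl
      _ ≤ |x1| + (∑ ℓ, |eps n ℓ ω k * ∑ m, H ℓ m * eps n m ω l|)
            + (∑ ℓ, |(∑ m, H ℓ m * eps n m ω k) * eps n ℓ ω l|)
            + ∑ ℓ, |(∑ m, H ℓ m * eps n m ω k) * ∑ m, H ℓ m * eps n m ω l| := by
          refine add_le_add (add_le_add (add_le_add le_rfl ?_) ?_) ?_
          · rw [hx2]; exact Finset.abs_sum_le_sum_abs _ _
          · rw [hx3]; exact Finset.abs_sum_le_sum_abs _ _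
          · rw [hx4]; exact Finset.abs_sum_le_sum_abs _ _
  -- integrability of the pieces
  have hIc1 : ∀ ℓ : Fin n, Integrable (fun ω => eps n ℓ ω k * ∑ m, H ℓ m * eps n m ω l) P :=
    fun ℓ => auxIntMul _ _ (hL2e k ℓ) (hv2 l ℓ)
  have hIc2 : ∀ ℓ : Fin n, Integrable (fun ω => (∑ m, H ℓ m * eps n m ω k) * eps n ℓ ω l) P :=
    fun ℓ => auxIntMul _ _ (hv2 k ℓ) (hL2e l ℓ)
  have hIc3 : ∀ ℓ : Fin n, Integrable
      (fun ω => (∑ m, H ℓ m * eps n m ω k) * ∑ m, H ℓ m * eps n m ω l) P :=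
    fun ℓ => auxIntMul _ _ (hv2 k ℓ) (hv2 l ℓ)
  have hF1 : Integrable (fun ω => |∑ ℓ, A ℓ ω|) P :=
    (integrable_finset_sum _ (fun ℓ _ => hAint ℓ)).abs
  have hF2 : Integrable (fun ω => ∑ ℓ, |eps n ℓ ω k * ∑ m, H ℓ m * eps n m ω l|) P :=
    integrable_finset_sum _ (fun ℓ _ => (hIc1 ℓ).abs)
  have hF3 : Integrable (fun ω => ∑ ℓ, |(∑ m, H ℓ m * eps n m ω k) * eps n ℓ ω l|) P :=
    integrable_finset_sum _ (fun ℓ _ => (hIc2 ℓ).abs)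
  have hF4 : Integrable
      (fun ω => ∑ ℓ, |(∑ m, H ℓ m * eps n m ω k) * ∑ m, H ℓ m * eps n m ω l|) P :=
    integrable_finset_sum _ (fun ℓ _ => (hIc3 ℓ).abs)
  have hG : Integrable (fun ω => (n : ℝ)⁻¹ *
      (|∑ ℓ, A ℓ ω| + ∑ ℓ, |eps n ℓ ω k * ∑ m, H ℓ m * eps n m ω l|
        + ∑ ℓ, |(∑ m, H ℓ m * eps n m ω k) * eps n ℓ ω l|
        + ∑ ℓ, |(∑ m, H ℓ m * eps n m ω k) * ∑ m, H ℓ m * eps n m ω l|)) P :=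
    (((hF1.add hF2).add hF3).add hF4).const_mul _
  -- integrability of the statistic itself
  have hres2k : ∀ ℓ : Fin n, MemLp (fun ω => resid X eps n ω ℓ k) 4 P :=
    fun ℓ => (hL4e k ℓ).sub (hv4 k ℓ)
  have hres2l : ∀ ℓ : Fin n, MemLp (fun ω => resid X eps n ω ℓ l) 4 P :=
    fun ℓ => (hL4e l ℓ).sub (hv4 l ℓ)
  have hIS : Integrable (fun ω => (n : ℝ)⁻¹ * ∑ ℓ,
      (resid X eps n ω ℓ k * resid X eps n ω ℓ l - Sig n ℓ k l)) P := by
    refine Integrable.const_mul ?_ _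
    refine integrable_finset_sum _ (fun ℓ _ => ?_)
    exact (auxIntMul _ _ (auxL2ofL4 _ (hres2k ℓ)) (auxL2ofL4 _ (hres2l ℓ))).sub
      (integrable_const _)
  refine ⟨hIS, ?_⟩
  -- integral of the majorant
  have hle := integral_mono_of_nonneg
    (Filter.Eventually.of_forall (fun ω => abs_nonneg _)) hG
    (Filter.Eventually.of_forall hpt)
  have hGeq : ∫ ω, ((n : ℝ)⁻¹ *
      (|∑ ℓ, A ℓ ω| + ∑ ℓ, |eps n ℓ ω k * ∑ m, H ℓ m * eps n m ω l|
        + ∑ ℓ, |(∑ m, H ℓ m * eps n m ω k) * eps n ℓ ω l|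
        + ∑ ℓ, |(∑ m, H ℓ m * eps n m ω k) * ∑ m, H ℓ m * eps n m ω l|)) ∂P
      = (n : ℝ)⁻¹ * ((∫ ω, |∑ ℓ, A ℓ ω| ∂P)
        + (∑ ℓ, ∫ ω, |eps n ℓ ω k * ∑ m, H ℓ m * eps n m ω l| ∂P)
        + (∑ ℓ, ∫ ω, |(∑ m, H ℓ m * eps n m ω k) * eps n ℓ ω l| ∂P)
        + ∑ ℓ, ∫ ω, |(∑ m, H ℓ m * eps n m ω k) * ∑ m, H ℓ m * eps n m ω l| ∂P) := by
    rw [integral_const_mul]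
    congr 1
    have e1 : ∫ ω, (|∑ ℓ, A ℓ ω| + ∑ ℓ, |eps n ℓ ω k * ∑ m, H ℓ m * eps n m ω l|
        + ∑ ℓ, |(∑ m, H ℓ m * eps n m ω k) * eps n ℓ ω l|
        + ∑ ℓ, |(∑ m, H ℓ m * eps n m ω k) * ∑ m, H ℓ m * eps n m ω l|) ∂P
        = (∫ ω, (|∑ ℓ, A ℓ ω| + ∑ ℓ, |eps n ℓ ω k * ∑ m, H ℓ m * eps n m ω l|
        + ∑ ℓ, |(∑ m, H ℓ m * eps n m ω k) * eps n ℓ ω l|) ∂P)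
        + ∫ ω, ∑ ℓ, |(∑ m, H ℓ m * eps n m ω k) * ∑ m, H ℓ m * eps n m ω l| ∂P :=
      integral_add ((hF1.add hF2).add hF3) hF4
    have e2 : ∫ ω, (|∑ ℓ, A ℓ ω| + ∑ ℓ, |eps n ℓ ω k * ∑ m, H ℓ m * eps n m ω l|
        + ∑ ℓ, |(∑ m, H ℓ m * eps n m ω k) * eps n ℓ ω l|) ∂P
        = (∫ ω, (|∑ ℓ, A ℓ ω| + ∑ ℓ, |eps n ℓ ω k * ∑ m, H ℓ m * eps n m ω l|) ∂P)
        + ∫ ω, ∑ ℓ, |(∑ m, H ℓ m * eps n m ω k) * eps n ℓ ω l| ∂P :=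
      integral_add (hF1.add hF2) hF3
    have e3 : ∫ ω, (|∑ ℓ, A ℓ ω| + ∑ ℓ, |eps n ℓ ω k * ∑ m, H ℓ m * eps n m ω l|) ∂P
        = (∫ ω, |∑ ℓ, A ℓ ω| ∂P)
        + ∫ ω, ∑ ℓ, |eps n ℓ ω k * ∑ m, H ℓ m * eps n m ω l| ∂P :=
      integral_add hF1 hF2
    rw [e1, e2, e3,
      integral_finset_sum _ (fun ℓ _ => (hIc1 ℓ).abs),
      integral_finset_sum _ (fun ℓ _ => (hIc2 ℓ).abs),
      integral_finset_sum _ (fun ℓ _ => (hIc3 ℓ).abs)]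
  rw [hGeq] at hle
  -- positivity facts
  have hn0 : (0:ℝ) < n := by
    have := Nat.lt_of_lt_of_le Nat.zero_lt_one h1n
    exact_mod_cast this
  have hsn : Real.sqrt n ≠ 0 := ne_of_gt (Real.sqrt_pos.mpr hn0)
  have hninv : (0:ℝ) ≤ (n : ℝ)⁻¹ := inv_nonneg.mpr hn0.le
  -- combine bounds
  have hbd : ∫ ω, |(n : ℝ)⁻¹ * ∑ ℓ,
      (resid X eps n ω ℓ k * resid X eps n ω ℓ l - Sig n ℓ k l)| ∂P
      ≤ (n : ℝ)⁻¹ * (Real.sqrt ((n : ℝ) * C₁)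
        + Real.sqrt ((n : ℝ) * Real.sqrt C₁) * Real.sqrt ((d : ℝ) * Real.sqrt C₁)
        + Real.sqrt ((d : ℝ) * Real.sqrt C₁) * Real.sqrt ((n : ℝ) * Real.sqrt C₁)
        + Real.sqrt ((d : ℝ) * Real.sqrt C₁) * Real.sqrt ((d : ℝ) * Real.sqrt C₁)) := by
    refine hle.trans (mul_le_mul_of_nonneg_left ?_ hninv)
    exact add_le_add (add_le_add (add_le_add hsumAabs T2) T3) T4
  -- algebraic simplification of the bound
  have hterm : Real.sqrt ((n : ℝ) * Real.sqrt C₁) * Real.sqrt ((d : ℝ) * Real.sqrt C₁)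
      = Real.sqrt (n : ℝ) * Real.sqrt ((d : ℝ) * C₁) := by
    rw [← Real.sqrt_mul (by positivity)]
    rw [show ((n:ℝ) * Real.sqrt C₁) * ((d:ℝ) * Real.sqrt C₁) = (n:ℝ) * ((d:ℝ) * C₁) by
      rw [mul_mul_mul_comm, Real.mul_self_sqrt hC₁]; ring]
    exact Real.sqrt_mul (Nat.cast_nonneg n) _
  have h4 : Real.sqrt ((d : ℝ) * Real.sqrt C₁) * Real.sqrt ((d : ℝ) * Real.sqrt C₁)
      = (d : ℝ) * Real.sqrt C₁ := Real.mul_self_sqrt (by positivity)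
  have hnC : Real.sqrt ((n : ℝ) * C₁) = Real.sqrt (n : ℝ) * Real.sqrt C₁ :=
    Real.sqrt_mul (Nat.cast_nonneg n) _
  have hns : (n : ℝ)⁻¹ * Real.sqrt (n : ℝ) = Real.sqrt ((n : ℝ)⁻¹) := by
    rw [Real.sqrt_inv]
    conv_lhs => rw [show ((n:ℝ))⁻¹ = (Real.sqrt n * Real.sqrt n)⁻¹ by
      rw [Real.mul_self_sqrt hn0.le]]
    rw [mul_inv, mul_assoc, inv_mul_cancel₀ hsn, mul_one]
  refine hbd.trans (le_of_eq ?_)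
  rw [hnC, hterm, mul_comm (Real.sqrt ((d:ℝ) * Real.sqrt C₁)) (Real.sqrt ((n:ℝ) * Real.sqrt C₁)),
    hterm, h4, ← hns]
  ring


/-- **Claim (10) in the proof of Theorem 1.** For independent centered errors with
uniformly bounded fourth moments and a fixed design of full column rank with uniformly
bounded entries and `N⁻¹X'X` converging to a positive definite limit, the averaged
residual outer products are consistent:
`N⁻¹ ∑_ℓ (u_ℓu_ℓ' − Σ_ℓ) → 0` element-wise in probability as `N → ∞`. -/
theorem averaged_residual_outer_products_consistent
    {p d : ℕ}
    (X : (N : ℕ) → Matrix (Fin N) (Fin d) ℝ)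
    {Ω : Type*} [MeasurableSpace Ω] (P : Measure Ω) [IsProbabilityMeasure P]
    (eps : (N : ℕ) → Fin N → Ω → Fin p → ℝ)
    (Sig : (N : ℕ) → Fin N → Matrix (Fin p) (Fin p) ℝ)
    (B C₁ : ℝ) (Ξ : Matrix (Fin d) (Fin d) ℝ)
    -- measurability and integrability of the errors
    (hmeas : ∀ N ℓ k, Measurable (fun ω => eps N ℓ ω k))
    (hL4 : ∀ N ℓ k, MemLp (fun ω => eps N ℓ ω k) 4 P)
    -- independent, centered errors with covariance matrices Σ_ℓ and uniformly bounded
    -- fourth moments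
    (hindep : ∀ N, iIndepFun
      (fun ℓ => eps N ℓ) P)
    (hmean : ∀ N ℓ k, ∫ ω, eps N ℓ ω k ∂P = 0)
    (hcov : ∀ N ℓ k l, ∫ ω, eps N ℓ ω k * eps N ℓ ω l ∂P = Sig N ℓ k l)
    (hmom4 : ∀ N ℓ k, ∫ ω, (eps N ℓ ω k) ^ 4 ∂P ≤ C₁)
    -- the design has uniformly bounded entries and full column rank, and N⁻¹X'X converges
    -- to a positive definite limit
    (hXbound : ∀ N ℓ r, |X N ℓ r| ≤ B)
    (hXrank : ∀ N, d ≤ N → (X N).rank = d)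
    (hΞpd : Ξ.PosDef)
    (hΞ : ∀ r s, Tendsto (fun N : ℕ => (N : ℝ)⁻¹ * ((X N)ᵀ * X N) r s) atTop (𝓝 (Ξ r s))) :
    ∀ (k l : Fin p) (δ : ℝ), 0 < δ →
      Tendsto (fun N : ℕ => P {ω | δ ≤
          |(N : ℝ)⁻¹ * ∑ ℓ,
            (resid X eps N ω ℓ k * resid X eps N ω ℓ l - Sig N ℓ k l)|})
        atTop (𝓝 0) := by
  intro k l δ hδ
  have hC₁ : 0 ≤ C₁ := by
    refine le_trans ?_ (hmom4 1 ⟨0, Nat.zero_lt_one⟩ k)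
    exact integral_nonneg fun ω => by positivity
  set c1 : ℝ := Real.sqrt C₁ + 2 * Real.sqrt (d * C₁) with hc1
  set c2 : ℝ := (d : ℝ) * Real.sqrt C₁ with hc2
  -- the deterministic bound tends to zero
  have hinv : Tendsto (fun N : ℕ => ((N : ℝ))⁻¹) atTop (𝓝 0) :=
    tendsto_inv_atTop_zero.comp tendsto_natCast_atTop_atTop
  have hsqrt : Tendsto (fun N : ℕ => Real.sqrt ((N : ℝ)⁻¹)) atTop (𝓝 0) :=
    (Real.continuous_sqrt.tendsto' 0 0 Real.sqrt_zero).comp hinv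
  have hr : Tendsto (fun N : ℕ => δ⁻¹ * (c1 * Real.sqrt ((N : ℝ)⁻¹) + c2 * (N : ℝ)⁻¹))
      atTop (𝓝 0) := by
    have := ((hsqrt.const_mul c1).add (hinv.const_mul c2)).const_mul δ⁻¹
    simpa using this
  have hh : Tendsto (fun N : ℕ =>
      ENNReal.ofReal (δ⁻¹ * (c1 * Real.sqrt ((N : ℝ)⁻¹) + c2 * (N : ℝ)⁻¹)))
      atTop (𝓝 0) := by
    have := ENNReal.tendsto_ofReal hr
    simpa using this
  refine tendsto_of_tendsto_of_tendsto_of_le_of_le' tendsto_const_nhds hh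
    (Filter.Eventually.of_forall fun N => zero_le) ?_
  filter_upwards [eventually_ge_atTop d, eventually_ge_atTop 1] with n hdn h1n
  obtain ⟨hIS, hbd⟩ := auxKey X P eps Sig C₁ hC₁ hL4 hindep hmean hcov hmom4 hXrank k l n hdn h1n
  set S : Ω → ℝ := fun ω => (n : ℝ)⁻¹ * ∑ ℓ,
    (resid X eps n ω ℓ k * resid X eps n ω ℓ l - Sig n ℓ k l) with hS
  have hm := mul_meas_ge_le_integral_of_nonneg (μ := P) (f := fun ω => |S ω|)
    (Filter.Eventually.of_forall fun ω => abs_nonneg _) hIS.abs δ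
  have h1 : (P {ω | δ ≤ |S ω|}).toReal ≤ δ⁻¹ * ∫ ω, |S ω| ∂P := by
    have h2 : (P {ω | δ ≤ |S ω|}).toReal = δ⁻¹ * (δ * (P {ω | δ ≤ |S ω|}).toReal) := by
      field_simp
    rw [h2]
    exact mul_le_mul_of_nonneg_left hm (inv_nonneg.mpr hδ.le)
  have h3 : (P {ω | δ ≤ |S ω|}).toReal ≤ δ⁻¹ * (c1 * Real.sqrt ((n : ℝ)⁻¹) + c2 * (n : ℝ)⁻¹) := by
    refine h1.trans (mul_le_mul_of_nonneg_left ?_ (inv_nonneg.mpr hδ.le))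
    refine hbd.trans (le_of_eq ?_)
    rw [hc1, hc2]
    try ring
  calc P {ω | δ ≤ |S ω|}
      = ENNReal.ofReal ((P {ω | δ ≤ |S ω|}).toReal) :=
        (ENNReal.ofReal_toReal (measure_ne_top P _)).symm
    _ ≤ ENNReal.ofReal (δ⁻¹ * (c1 * Real.sqrt ((n : ℝ)⁻¹) + c2 * (n : ℝ)⁻¹)) :=
        ENNReal.ofReal_le_ofReal h3
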